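/- Let f : ℝ≥0 → ℝ be locally bounded, let h ≥ 0, and for an open set A let D_f(A,h) denote the Hausdorff dimension of {t ∈ A : h_f(t) = h}, where h_f is the pointwise Hölder exponent of f. Then for any open interval I = (a,b) ⊂ ℝ≥0, D_f(I,h) = sup over t ∈ I of D_f(t,h), where D_f(t,h) = lim_{n→∞} D_f(V_n, h) for any basis of neighborhoods (V_n) of t. -/

import Mathlib

open MeasureTheory Filter Set
open scoped ENNReal Classical

/-- Pointwise Hölder exponent (with polynomial correction), `sSup ∅ = 0`. -/
noncomputable def holderExponent (f : ℝ → ℝ) (t₀ : ℝ) : ℝ :=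
  sSup {α : ℝ | 0 < α ∧ ∃ C : ℝ, 0 < C ∧ ∃ P : Polynomial ℝ, (P.natDegree : ℝ) < α ∧
    ∀ᶠ t in nhds t₀, |f t - P.eval t| ≤ C * |t - t₀| ^ α}

/-- Singularity spectrum of `f` on a set `A`, with convention `dim ∅ = ⊥ = -∞`. -/

noncomputable def spectrumOn (f : ℝ → ℝ) (A : Set ℝ) (h : ℝ) : EReal :=
  if {t | t ∈ A ∧ holderExponent f t = h} = ∅ then ⊥
  else ((dimH {t | t ∈ A ∧ holderExponent f t = h} : ℝ≥0∞) : EReal)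

/-- Local spectrum at `t₀`: the limit of `spectrumOn` over shrinking neighborhoods,
which by monotonicity equals the infimum over neighborhoods of `t₀`. -/
noncomputable def localSpectrum (f : ℝ → ℝ) (t₀ : ℝ) (h : ℝ) : EReal :=
  ⨅ (V : Set ℝ) (_ : V ∈ nhds t₀), spectrumOn f V h

open scoped Topology

namespace HausdorffDimension

variable {X : Type*} [EMetricSpace X]

noncomputable def dimHBot (s : Set X) : EReal :=
  if s = ∅ then ⊥ else (dimH s : EReal)

theorem dimHBot_of_nonempty {s : Set X} (hs : s.Nonempty) : dimHBot s = dimH s :=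
  if_neg hs.ne_empty

theorem dimHBot_mono {s t : Set X} (hst : s ⊆ t) : dimHBot s ≤ dimHBot t := by
  rcases s.eq_empty_or_nonempty with rfl | hs
  · simp [dimHBot]
  · rw [dimHBot_of_nonempty hs, dimHBot_of_nonempty (hs.mono hst)]
    exact EReal.coe_ennreal_le_coe_ennreal_iff.2 (dimH_mono hst)

theorem dimHBot_biUnion_le {ι : Type*} {T : Set ι} (hT : T.Countable) (s : ι → Set X)
    {c : EReal} (hc : ∀ i ∈ T, dimHBot (s i) ≤ c) : dimHBot (⋃ i ∈ T, s i) ≤ c := by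
  rcases (⋃ i ∈ T, s i).eq_empty_or_nonempty with hempty | ⟨x, hx⟩
  · simp [dimHBot, hempty]
  obtain ⟨j, hj, hxj⟩ := Set.mem_iUnion₂.1 hx
  have hc0 : 0 ≤ c := by
    have := hc j hj
    rw [dimHBot_of_nonempty ⟨x, hxj⟩] at this
    exact (EReal.coe_ennreal_nonneg _).trans this
  rw [dimHBot_of_nonempty ⟨x, hx⟩, dimH_bUnion hT, ← EReal.coe_toENNReal hc0,
    EReal.coe_ennreal_le_coe_ennreal_iff]
  refine iSup₂_le fun i hi => ?_
  rcases (s i).eq_empty_or_nonempty with hsi | hsi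
  · simp [hsi]
  · have := hc i hi
    rwa [dimHBot_of_nonempty hsi, ← EReal.coe_toENNReal hc0,
      EReal.coe_ennreal_le_coe_ennreal_iff] at this

/-- Countable stability of Hausdorff dimension makes it a local quantity: on an open set it is
the supremum of its germs at the points of the set. -/
theorem dimHBot_inter_eq_iSup_iInf_nhds [SecondCountableTopology X] {U : Set X}
    (hU : IsOpen U) (E : Set X) :
    dimHBot (U ∩ E) = ⨆ x ∈ U, ⨅ V ∈ 𝓝 x, dimHBot (V ∩ E) := by
  refine le_antisymm (le_of_forall_gt_imp_ge_of_dense fun c hc => ?_)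
    (iSup₂_le fun x hx => iInf₂_le U (hU.mem_nhds hx))
  have hsmall : ∀ x ∈ U ∩ E, ∃ V ∈ 𝓝 x, dimHBot (V ∩ E) < c := by
    intro x hx
    have : ⨅ V ∈ 𝓝 x, dimHBot (V ∩ E) < c :=
      (le_iSup₂ (f := fun x _ => ⨅ V ∈ 𝓝 x, dimHBot (V ∩ E)) x hx.1).trans_lt hc
    simpa only [iInf_lt_iff, exists_prop] using this
  choose! V hVx hVc using hsmall
  obtain ⟨T, hTU, hT, hcover⟩ := TopologicalSpace.countable_cover_nhdsWithin
    fun x hx => mem_nhdsWithin_of_mem_nhds (hVx x hx)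
  calc dimHBot (U ∩ E) ≤ dimHBot (⋃ x ∈ T, V x ∩ E) := dimHBot_mono fun y hy => by
        obtain ⟨x, hxT, hyx⟩ := Set.mem_iUnion₂.1 (hcover hy)
        exact Set.mem_iUnion₂.2 ⟨x, hxT, hyx, hy.2⟩
    _ ≤ c := dimHBot_biUnion_le hT _ fun x hx => (hVc x (hTU hx)).le

end HausdorffDimension

open HausdorffDimension

theorem spectrumOn_eq_dimHBot (f : ℝ → ℝ) (A : Set ℝ) (h : ℝ) :
    spectrumOn f A h = dimHBot (A ∩ {t | holderExponent f t = h}) :=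
  rfl

theorem stmt0_general (f : ℝ → ℝ)
    (h : ℝ) (a b : ℝ) :
    spectrumOn f (Set.Ioo a b) h = ⨆ t ∈ Set.Ioo a b, localSpectrum f t h := by
  simp only [localSpectrum, spectrumOn_eq_dimHBot]
  exact dimHBot_inter_eq_iSup_iInf_nhds isOpen_Ioo _

theorem stmt0 (f : ℝ → ℝ)
    (hf : ∀ t : ℝ, ∃ C : ℝ, ∀ᶠ s in nhds t, |f s| ≤ C)
    (h : ℝ) (hh : 0 ≤ h) (a b : ℝ) (ha : 0 ≤ a) (hab : a < b) :
    spectrumOn f (Set.Ioo a b) h = ⨆ t ∈ Set.Ioo a b, localSpectrum f t h :=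
  stmt0_general f h a b
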